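/- arXiv:1411.6301 — 2 statements merged into one kernel-verified Lean document; each statement's English description precedes it below -/
import Mathlib

section
/- Let H be a finite abelian group (written multiplicatively) and let q : ℕ → H → ℝ[x,x⁻¹] be such that each q_{j,g} has nonnegative coefficients and Σ_{g∈H} q_{j,g}(1) = 1 for every j. Suppose that for every maximal proper subgroup K of H the series Σ_j (Σ_{(g,h) ∈ H×H : g·h⁻¹ ∉ K} (q_{j,g} ∧ q_{j,h})(1)) diverges, where u ∧ v denotes the coefficientwise minimum of two Laurent polynomials with nonnegative coefficients. Then the sequence is hollow: for every character α ≠ 1 of H and every j₀ ≥ 0, the l¹ norms ‖∏_{j=j₀}^{j₀+d} p_{α,j}‖₁ tend to 0 as d → ∞, where p_{α,j} := Σ_{g∈H} α(g⁻¹)·q_{j,g} ∈ ℂ[x,x⁻¹]. -/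
/-!
Choose a maximal subgroup `K ⊇ ker α`. For every pair `(g, h)` with `g h⁻¹ ∉ K` the unit
complex numbers `α g⁻¹ ≠ α h⁻¹` satisfy `|α g⁻¹ + α h⁻¹| ≤ 2 - c` for a uniform `c > 0`, so in
each coefficient of `p_{α,j}` the triangle inequality loses `c · min (q_{j,g}, q_{j,h})`. The pair
maximising `(q_{j,g} ∧ q_{j,h})(1)` yields `‖p_{α,j}‖₁ ≤ 1 - ε_j` with `ε_j` proportional to the
`j`-th term of the divergent series, and submultiplicativity of `‖·‖₁` bounds the norm of the
product by `∏ (1 - ε_j) ≤ exp (-∑ ε_j) → 0`.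
-/

open Finsupp Filter

/-- The coefficients of a real Laurent polynomial. -/
def lcoeff (p : AddMonoidAlgebra ℝ ℤ) : ℤ →₀ ℝ := p.coeff

/-- The coefficients of a complex Laurent polynomial. -/
def lcoeffC (p : AddMonoidAlgebra ℂ ℤ) : ℤ →₀ ℂ := p.coeff

/-- The `l¹` norm of a complex Laurent polynomial. -/
noncomputable def l1C (p : AddMonoidAlgebra ℂ ℤ) : ℝ := (lcoeffC p).sum fun _ c => ‖c‖

/-- Evaluation of a real Laurent polynomial at `x = 1`. -/
noncomputable def ev1 (p : AddMonoidAlgebra ℝ ℤ) : ℝ := (lcoeff p).sum fun _ c => c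

/-- A real Laurent polynomial viewed as a complex Laurent polynomial. -/
noncomputable def toC (p : AddMonoidAlgebra ℝ ℤ) : AddMonoidAlgebra ℂ ℤ :=
  AddMonoidAlgebra.ofCoeff (Finsupp.mapRange (fun r : ℝ => (r : ℂ)) Complex.ofReal_zero (lcoeff p))

/-- `(u ∧ v)(1)`: the sum of the coefficientwise minima of two Laurent polynomials. -/
noncomputable def minev (u v : AddMonoidAlgebra ℝ ℤ) : ℝ :=
  ∑ m ∈ (lcoeff u).support ∪ (lcoeff v).support, min (lcoeff u m) (lcoeff v m)

open Finset

lemma l1C_eq_sum_of_support_subset (p : AddMonoidAlgebra ℂ ℤ) {s : Finset ℤ}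
    (hs : (lcoeffC p).support ⊆ s) : l1C p = ∑ n ∈ s, ‖lcoeffC p n‖ :=
  Finsupp.sum_of_support_subset _ hs _ fun _ _ => norm_zero

lemma l1C_nonneg (p : AddMonoidAlgebra ℂ ℤ) : 0 ≤ l1C p :=
  Finsupp.sum_nonneg fun _ _ => norm_nonneg _

lemma l1C_zero : l1C 0 = 0 := by
  simp [l1C, lcoeffC]

lemma l1C_single (n : ℤ) (c : ℂ) : l1C (AddMonoidAlgebra.single n c) = ‖c‖ :=
  Finsupp.sum_single_index norm_zero

lemma l1C_one : l1C 1 = 1 := by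
  rw [AddMonoidAlgebra.one_def, l1C_single, norm_one]

lemma l1C_add_le (p q : AddMonoidAlgebra ℂ ℤ) : l1C (p + q) ≤ l1C p + l1C q := by
  classical
  rw [l1C_eq_sum_of_support_subset (p + q) Finsupp.support_add,
    l1C_eq_sum_of_support_subset p subset_union_left,
    l1C_eq_sum_of_support_subset q subset_union_right, ← sum_add_distrib]
  exact sum_le_sum fun n _ => norm_add_le _ _

lemma l1C_mul_le (p q : AddMonoidAlgebra ℂ ℤ) : l1C (p * q) ≤ l1C p * l1C q := by
  have hsub {ι : Type} := le_sum_of_subadditive (ι := ι) l1C l1C_zero.le l1C_add_le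
  calc l1C (p * q)
      = l1C (∑ m ∈ (lcoeffC p).support, ∑ n ∈ (lcoeffC q).support,
          AddMonoidAlgebra.single (m + n) (lcoeffC p m * lcoeffC q n)) := by
        rw [AddMonoidAlgebra.mul_def]; rfl
    _ ≤ ∑ m ∈ (lcoeffC p).support, ∑ n ∈ (lcoeffC q).support,
          l1C (AddMonoidAlgebra.single (m + n) (lcoeffC p m * lcoeffC q n)) :=
        (hsub _ _).trans (sum_le_sum fun _ _ => hsub _ _)
    _ = l1C p * l1C q := by
        simp only [l1C_single, norm_mul, ← sum_mul_sum]; rfl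

section TriangleDefect

variable {E : Type*} [SeminormedAddCommGroup E] [NormedSpace ℝ E]

lemma norm_smul_add_smul_le {x y : E} (hx : ‖x‖ ≤ 1) (hy : ‖y‖ ≤ 1) {a b : ℝ} (ha : 0 ≤ a)
    (hb : 0 ≤ b) : ‖a • x + b • y‖ ≤ a + b - (2 - ‖x + y‖) * min a b := by
  set m := min a b
  have hma : 0 ≤ a - m := sub_nonneg.2 (min_le_left a b)
  have hmb : 0 ≤ b - m := sub_nonneg.2 (min_le_right a b)
  have hm : 0 ≤ m := le_min ha hb
  calc ‖a • x + b • y‖ = ‖(a - m) • x + (b - m) • y + m • (x + y)‖ := by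
        congr 1; module
    _ ≤ (a - m) * ‖x‖ + (b - m) * ‖y‖ + m * ‖x + y‖ := by
        refine (norm_add₃_le).trans_eq ?_
        rw [norm_smul_of_nonneg hma, norm_smul_of_nonneg hmb, norm_smul_of_nonneg hm]
    _ ≤ (a - m) * 1 + (b - m) * 1 + m * ‖x + y‖ := by gcongr
    _ = a + b - (2 - ‖x + y‖) * m := by ring

lemma norm_sum_smul_le {ι : Type*} [Fintype ι] {z : ι → E} (hz : ∀ k, ‖z k‖ ≤ 1) {a : ι → ℝ}
    (ha : ∀ k, 0 ≤ a k) {i j : ι} (hij : i ≠ j) :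
    ‖∑ k, a k • z k‖ ≤ ∑ k, a k - (2 - ‖z i + z j‖) * min (a i) (a j) := by
  classical
  have hrest : ‖∑ k ∈ {i, j}ᶜ, a k • z k‖ ≤ ∑ k ∈ {i, j}ᶜ, a k :=
    (norm_sum_le _ _).trans <| sum_le_sum fun k _ => by
      simpa [norm_smul_of_nonneg (ha k)] using mul_le_of_le_one_right (ha k) (hz k)
  rw [← sum_add_sum_compl {i, j}, ← sum_add_sum_compl {i, j} a, sum_pair hij, sum_pair hij]
  linarith [norm_add_le (a i • z i + a j • z j) (∑ k ∈ {i, j}ᶜ, a k • z k),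
    norm_smul_add_smul_le (hz i) (hz j) (ha i) (ha j)]

end TriangleDefect

lemma norm_add_lt_two {E : Type*} [NormedAddCommGroup E] [NormedSpace ℝ E]
    [StrictConvexSpace ℝ E] {x y : E} (hx : ‖x‖ = 1) (hy : ‖y‖ = 1) (hxy : x ≠ y) :
    ‖x + y‖ < 2 := by
  simpa [hx, hy, one_add_one_eq_two] using
    norm_add_lt_of_not_sameRay fun h => hxy (h.eq_of_norm_eq (hx.trans hy.symm))

section EigenvaluePolynomial

lemma ev1_eq_sum_of_support_subset (p : AddMonoidAlgebra ℝ ℤ) {s : Finset ℤ}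
    (hs : (lcoeff p).support ⊆ s) : ev1 p = ∑ n ∈ s, lcoeff p n :=
  Finsupp.sum_of_support_subset _ hs _ fun _ _ => rfl

lemma minev_eq_sum_of_support_subset (u v : AddMonoidAlgebra ℝ ℤ) {s : Finset ℤ}
    (hs : (lcoeff u).support ∪ (lcoeff v).support ⊆ s) :
    minev u v = ∑ n ∈ s, min (lcoeff u n) (lcoeff v n) :=
  sum_subset hs fun n _ hn => by
    rw [mem_union, not_or, Finsupp.notMem_support_iff, Finsupp.notMem_support_iff] at hn
    rw [hn.1, hn.2, min_self]

lemma minev_nonneg {u v : AddMonoidAlgebra ℝ ℤ} (hu : ∀ n, 0 ≤ lcoeff u n)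
    (hv : ∀ n, 0 ≤ lcoeff v n) : 0 ≤ minev u v :=
  sum_nonneg fun n _ => le_min (hu n) (hv n)

variable {ι : Type*} [Fintype ι]

lemma lcoeffC_sum_smul_toC (q : ι → AddMonoidAlgebra ℝ ℤ) (z : ι → ℂ) (n : ℤ) :
    lcoeffC (∑ k, z k • toC (q k)) n = ∑ k, lcoeff (q k) n • z k := by
  simp [lcoeffC, toC, AddMonoidAlgebra.coeff_sum, Complex.real_smul, mul_comm]

lemma l1C_sum_smul_toC_le (q : ι → AddMonoidAlgebra ℝ ℤ) (hq : ∀ k n, 0 ≤ lcoeff (q k) n)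
    {z : ι → ℂ} (hz : ∀ k, ‖z k‖ ≤ 1) {i j : ι} (hij : i ≠ j) :
    l1C (∑ k, z k • toC (q k)) ≤ ∑ k, ev1 (q k) - (2 - ‖z i + z j‖) * minev (q i) (q j) := by
  classical
  set T := univ.biUnion fun k => (lcoeff (q k)).support
  have hT : ∀ k, (lcoeff (q k)).support ⊆ T := fun k =>
    subset_biUnion_of_mem (fun k => (lcoeff (q k)).support) (mem_univ k)
  have hsupp : (lcoeffC (∑ k, z k • toC (q k))).support ⊆ T := by
    intro n hn
    by_contra hnT
    refine Finsupp.mem_support_iff.1 hn ?_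
    rw [lcoeffC_sum_smul_toC]
    exact sum_eq_zero fun k _ => by
      rw [Finsupp.notMem_support_iff.1 fun h => hnT (hT k h), zero_smul]
  rw [l1C_eq_sum_of_support_subset _ hsupp,
    minev_eq_sum_of_support_subset _ _ (union_subset (hT i) (hT j)),
    sum_congr rfl fun k _ => ev1_eq_sum_of_support_subset _ (hT k), Finset.sum_comm, Finset.mul_sum,
    ← sum_sub_distrib]
  refine sum_le_sum fun n _ => ?_
  rw [lcoeffC_sum_smul_toC]
  exact norm_sum_smul_le hz (fun k => hq k n) hij

lemma l1C_sum_smul_toC_le_sub_div_card_mul_sum (q : ι → AddMonoidAlgebra ℝ ℤ)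
    (hq : ∀ k n, 0 ≤ lcoeff (q k) n) {z : ι → ℂ} (hz : ∀ k, ‖z k‖ ≤ 1) {s : Finset (ι × ι)}
    (hs : s.Nonempty) (hne : ∀ x ∈ s, x.1 ≠ x.2) {c : ℝ} (hc : 0 ≤ c)
    (hcs : ∀ x ∈ s, c ≤ 2 - ‖z x.1 + z x.2‖) :
    l1C (∑ k, z k • toC (q k))
      ≤ ∑ k, ev1 (q k) - c / #s * ∑ x ∈ s, minev (q x.1) (q x.2) := by
  obtain ⟨x, hx, hmax⟩ := s.exists_max_image (fun x => minev (q x.1) (q x.2)) hs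
  have hsum : ∑ y ∈ s, minev (q y.1) (q y.2) ≤ #s * minev (q x.1) (q x.2) := by
    simpa using sum_le_card_nsmul s _ _ hmax
  have hcard : (0 : ℝ) < #s := by exact_mod_cast hs.card_pos
  have hloss : c / #s * ∑ y ∈ s, minev (q y.1) (q y.2)
      ≤ (2 - ‖z x.1 + z x.2‖) * minev (q x.1) (q x.2) :=
    calc c / #s * ∑ y ∈ s, minev (q y.1) (q y.2)
        ≤ c / #s * (#s * minev (q x.1) (q x.2)) := by gcongr
      _ = c * minev (q x.1) (q x.2) := by field_simp
      _ ≤ _ := mul_le_mul_of_nonneg_right (hcs x hx) (minev_nonneg (hq _) (hq _))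
  linarith [l1C_sum_smul_toC_le q hq hz (hne x hx)]

end EigenvaluePolynomial

lemma tendsto_prod_Icc_zero_of_le_one_sub {u ε : ℕ → ℝ} (hu : ∀ j, 0 ≤ u j) (hε : ∀ j, 0 ≤ ε j)
    (huε : ∀ j, u j ≤ 1 - ε j) (hdiv : ¬ Summable ε) (j₀ : ℕ) :
    Tendsto (fun d => ∏ j ∈ Icc j₀ (j₀ + d), u j) atTop (nhds 0) := by
  have htail : Tendsto (fun d => ∑ j ∈ Icc j₀ (j₀ + d), ε j) atTop atTop := by
    have hshift := (not_summable_iff_tendsto_nat_atTop_of_nonneg fun n => hε (n + j₀)).1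
      (by rwa [summable_nat_add_iff])
    refine (hshift.comp (tendsto_add_atTop_nat 1)).congr fun d => ?_
    rw [← Ico_add_one_right_eq_Icc, sum_Ico_eq_sum_range, add_assoc, Nat.add_sub_cancel_left]
    simp only [Function.comp_apply, add_comm]
  refine squeeze_zero (fun d => prod_nonneg fun j _ => hu j) (fun d => ?_)
    (Real.tendsto_exp_atBot.comp (tendsto_neg_atTop_atBot.comp htail))
  calc ∏ j ∈ Icc j₀ (j₀ + d), u j ≤ ∏ j ∈ Icc j₀ (j₀ + d), Real.exp (-ε j) :=
        prod_le_prod (fun j _ => hu j) fun j _ =>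
          (huε j).trans (by linarith [Real.add_one_le_exp (-ε j)])
    _ = Real.exp (-∑ j ∈ Icc j₀ (j₀ + d), ε j) := by rw [← Real.exp_sum, sum_neg_distrib]

lemma MonoidHom.map_inv_ne_of_mul_inv_notMem_ker {G M : Type*} [Group G] [MulOneClass M]
    (α : G →* M) {g h : G} (hgh : g * h⁻¹ ∉ α.ker) : α g⁻¹ ≠ α h⁻¹ := fun heq =>
  hgh <| by rw [MonoidHom.mem_ker, map_mul, ← heq, ← map_mul, mul_inv_cancel, map_one]

open scoped Classical in
/-- Lemma 2.2 (a Mineka-type hollowness criterion): if for every maximal proper subgroup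
`K` of `H` the series `∑_j ∑_{gh⁻¹ ∉ K} (q_{j,g} ∧ q_{j,h})(1)` diverges, then the
sequence is hollow: for every nontrivial character `α` the `l¹` norms of the products
of eigenvalue polynomials `∏_{j=j₀}^{j₀+d} p_{α,j}` tend to `0`. -/
theorem mineka_hollowness_criterion {H : Type} [CommGroup H] [Fintype H]
    (q : ℕ → H → AddMonoidAlgebra ℝ ℤ)
    (hpos : ∀ j g m, 0 ≤ lcoeff (q j g) m)
    (hsum : ∀ j, ∑ g, ev1 (q j g) = 1)
    (hdiv : ∀ K : Subgroup H, IsCoatom K →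
      ¬ Summable (fun j => ∑ g, ∑ h,
        if g * h⁻¹ ∈ K then 0 else minev (q j g) (q j h))) :
    ∀ α : H →* ℂ, α ≠ 1 → ∀ j₀ : ℕ,
      Tendsto
        (fun d => l1C (∏ j ∈ Finset.Icc j₀ (j₀ + d), ∑ g, α g⁻¹ • toC (q j g)))
        atTop (nhds 0) := by
  intro α hα j₀
  obtain ⟨K, hK, hker⟩ : ∃ K : Subgroup H, IsCoatom K ∧ α.ker ≤ K :=
    (eq_top_or_exists_le_coatom α.ker).resolve_left fun h => hα (MonoidHom.ker_eq_top_iff.1 h)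
  set s := univ.filter fun x : H × H => x.1 * x.2⁻¹ ∉ K
  have hne : ∀ x ∈ s, x.1 ≠ x.2 := fun x hx h => (mem_filter.1 hx).2 (by simp [h, K.one_mem])
  have hs : s.Nonempty := by
    obtain ⟨g, hg⟩ := (SetLike.exists_of_lt hK.lt_top).imp fun _ h => h.2
    exact ⟨(g, 1), by simpa [s] using hg⟩
  have hz : ∀ g : H, ‖α g⁻¹‖ = 1 := fun g => (α.isOfFinOrder (isOfFinOrder_of_finite _)).norm_eq_one
  set c := s.inf' hs fun x => 2 - ‖α x.1⁻¹ + α x.2⁻¹‖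
  have hc : 0 < c := (lt_inf'_iff hs).2 fun x hx => sub_pos.2 <| norm_add_lt_two (hz _) (hz _) <|
    α.map_inv_ne_of_mul_inv_notMem_ker fun h => (mem_filter.1 hx).2 (hker h)
  have hdivK : ¬ Summable fun j => c / #s * ∑ x ∈ s, minev (q j x.1) (q j x.2) := by
    rw [summable_mul_left_iff (by positivity)]
    simpa only [s, sum_filter, ite_not, Fintype.sum_prod_type] using hdiv K hK
  refine squeeze_zero (fun _ => l1C_nonneg _)
    (fun d => le_prod_of_submultiplicative_of_nonneg l1C l1C_nonneg l1C_one.le l1C_mul_le _ _)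
    (tendsto_prod_Icc_zero_of_le_one_sub (fun _ => l1C_nonneg _)
      (fun j => mul_nonneg (by positivity) <|
        sum_nonneg fun _ _ => minev_nonneg (hpos j _) (hpos j _))
      (fun j => ?_) hdivK j₀)
  rw [← hsum j]
  exact l1C_sum_smul_toC_le_sub_div_card_mul_sum (q j) (hpos j) (fun g => (hz g).le) hs hne hc.le
    fun x hx => inf'_le _ hx
end

section
/- Let k ≥ 2 be an integer, let a and c be Laurent polynomials in ℝ[x,x⁻¹] with nonnegative coefficients, let b ∈ ℝ[x,x⁻¹] have all coefficients at exponents not divisible by k equal to zero, and let ε > 0 satisfy (k² − k)·ε < 1/2. If ‖a·c − b‖₁ < ε·a(1)·c(1), then there exist j ∈ {0, 1, …, k−1} and Laurent polynomials a', c' ∈ ℝ[x,x⁻¹], each with nonnegative coefficients and supported on exponents divisible by k, such that ‖x^j·a' − a‖₁ < (k² − k)·ε·a(1) and ‖x^{−j}·c' − c‖₁ < (k² − k)·ε·c(1). -/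
open Finsupp

/-- The `l¹` norm of a real Laurent polynomial. -/
noncomputable def l1R (p : AddMonoidAlgebra ℝ ℤ) : ℝ := (lcoeff p).sum fun _ c => |c|

/-
Choose a residue `r` mod `k` carrying at least a `1/k` share of the mass of `a`, and split
`a = a_r + (a - a_r)`, `c = c_{-r} + (c - c_{-r})`, where `p_s` keeps the coefficients of `p` at
exponents `≡ s (mod k)`. The products `a_r (c - c_{-r})` and `(a - a_r) c_{-r}` have nonnegative
coefficients, are dominated by `a c`, and live on exponents not divisible by `k`, where `b`
vanishes; so the mass of each is at most `‖a c - b‖₁ < ε a(1) c(1)`. The first bound gives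
`(c - c_{-r})(1) < k ε c(1)`, hence `c_{-r}(1) > c(1)/2`, and then the second gives
`(a - a_r)(1) < 2 ε a(1)`. Shifting `a_r` by `x^{-j}` and `c_{-r}` by `x^j` (`j ≡ r`) lands
both in `B`.
-/

open AddMonoidAlgebra
open scoped Pointwise

lemma lcoeff_sub (p q : AddMonoidAlgebra ℝ ℤ) : lcoeff (p - q) = lcoeff p - lcoeff q := rfl

lemma lcoeff_add (p q : AddMonoidAlgebra ℝ ℤ) : lcoeff (p + q) = lcoeff p + lcoeff q := rfl

lemma lcoeff_single (n : ℤ) (x : ℝ) :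
    lcoeff (AddMonoidAlgebra.single n x) = Finsupp.single n x := rfl

noncomputable def ev1Hom : AddMonoidAlgebra ℝ ℤ →+* ℝ :=
  liftNCRingHom (RingHom.id ℝ) 1 fun _ _ => Commute.all _ _

lemma ev1Hom_apply (p : AddMonoidAlgebra ℝ ℤ) : ev1Hom p = ev1 p :=
  Finsupp.sum_congr fun _ _ => mul_one _

lemma ev1_mul (p q : AddMonoidAlgebra ℝ ℤ) : ev1 (p * q) = ev1 p * ev1 q := by
  simp only [← ev1Hom_apply, map_mul]

lemma ev1_sub (p q : AddMonoidAlgebra ℝ ℤ) : ev1 (p - q) = ev1 p - ev1 q := by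
  simp only [← ev1Hom_apply, map_sub]

lemma ev1_sum {ι : Type*} (s : Finset ι) (f : ι → AddMonoidAlgebra ℝ ℤ) :
    ev1 (∑ i ∈ s, f i) = ∑ i ∈ s, ev1 (f i) := by
  simp only [← ev1Hom_apply, map_sum]

lemma l1R_nonneg (p : AddMonoidAlgebra ℝ ℤ) : 0 ≤ l1R p :=
  Finset.sum_nonneg fun _ _ => abs_nonneg _

lemma l1R_eq_ev1 {p : AddMonoidAlgebra ℝ ℤ} (hp : ∀ m, 0 ≤ lcoeff p m) : l1R p = ev1 p :=
  Finsupp.sum_congr fun m _ => abs_of_nonneg (hp m)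

lemma ev1_nonneg {p : AddMonoidAlgebra ℝ ℤ} (hp : ∀ m, 0 ≤ lcoeff p m) : 0 ≤ ev1 p :=
  l1R_eq_ev1 hp ▸ l1R_nonneg p

lemma ev1_mono {p q : AddMonoidAlgebra ℝ ℤ} (hpq : ∀ m, lcoeff p m ≤ lcoeff q m) :
    ev1 p ≤ ev1 q :=
  sub_nonneg.1 <| ev1_sub q p ▸ ev1_nonneg (p := q - p) fun m => sub_nonneg.2 (hpq m)

lemma l1R_neg (p : AddMonoidAlgebra ℝ ℤ) : l1R (-p) = l1R p := by
  change (-lcoeff p).sum _ = _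
  rw [Finsupp.sum_neg_index fun _ => abs_zero]
  exact Finsupp.sum_congr fun _ _ => abs_neg _

lemma l1R_sub_eq_of_le {p q : AddMonoidAlgebra ℝ ℤ} (hqp : ∀ m, lcoeff q m ≤ lcoeff p m) :
    l1R (q - p) = ev1 p - ev1 q := by
  rw [← neg_sub, l1R_neg, ← ev1_sub, l1R_eq_ev1 (p := p - q) fun m => sub_nonneg.2 (hqp m)]

lemma l1R_le_of_abs_le {p q : AddMonoidAlgebra ℝ ℤ}
    (hpq : ∀ m, |lcoeff p m| ≤ |lcoeff q m|) : l1R p ≤ l1R q := by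
  have hsupp : (lcoeff p).support ⊆ (lcoeff q).support := fun m hm => by
    rw [Finsupp.mem_support_iff, ← abs_pos] at hm ⊢
    exact hm.trans_le (hpq m)
  calc l1R p ≤ ∑ m ∈ (lcoeff p).support, |lcoeff q m| := Finset.sum_le_sum fun m _ => hpq m
    _ ≤ l1R q := Finset.sum_le_sum_of_subset_of_nonneg hsupp fun _ _ _ => abs_nonneg _

lemma lcoeff_mul_nonneg {p q : AddMonoidAlgebra ℝ ℤ} (hp : ∀ m, 0 ≤ lcoeff p m)
    (hq : ∀ m, 0 ≤ lcoeff q m) (m : ℤ) : 0 ≤ lcoeff (p * q) m := by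
  classical
  rw [lcoeff, coeff_mul]
  exact Finset.sum_nonneg fun i _ => Finset.sum_nonneg fun j _ => by
    dsimp only
    split_ifs
    exacts [mul_nonneg (hp i) (hq j), le_rfl]

lemma lcoeff_mul_le_mul {p₁ p q₁ q : AddMonoidAlgebra ℝ ℤ}
    (hp₁ : ∀ m, 0 ≤ lcoeff p₁ m) (hp : ∀ m, lcoeff p₁ m ≤ lcoeff p m)
    (hq₁ : ∀ m, 0 ≤ lcoeff q₁ m) (hq : ∀ m, lcoeff q₁ m ≤ lcoeff q m) (m : ℤ) :
    lcoeff (p₁ * q₁) m ≤ lcoeff (p * q) m := by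
  have hsplit : p * q = (p - p₁) * q + p₁ * (q - q₁) + p₁ * q₁ := by ring
  have h₁ := lcoeff_mul_nonneg (p := p - p₁) (fun m => sub_nonneg.2 (hp m))
    (fun m => (hq₁ m).trans (hq m)) m
  have h₂ := lcoeff_mul_nonneg (q := q - q₁) hp₁ (fun m => sub_nonneg.2 (hq m)) m
  rw [hsplit, lcoeff_add, lcoeff_add, Finsupp.add_apply, Finsupp.add_apply]
  linarith

lemma exists_mem_support_of_lcoeff_mul_ne_zero {p q : AddMonoidAlgebra ℝ ℤ} {m : ℤ}
    (h : lcoeff (p * q) m ≠ 0) :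
    ∃ m₁ m₂, lcoeff p m₁ ≠ 0 ∧ lcoeff q m₂ ≠ 0 ∧ m₁ + m₂ = m := by
  classical
  obtain ⟨m₁, h₁, m₂, h₂, rfl⟩ :=
    Finset.mem_add.1 (support_coeff_mul_subset p q (Finsupp.mem_support_iff.2 h))
  exact ⟨m₁, m₂, Finsupp.mem_support_iff.1 h₁, Finsupp.mem_support_iff.1 h₂, rfl⟩

lemma single_mul_single_mul_cancel {m n : ℤ} (h : m + n = 0) (p : AddMonoidAlgebra ℝ ℤ) :
    AddMonoidAlgebra.single m (1 : ℝ) * (AddMonoidAlgebra.single n 1 * p) = p := by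
  rw [← mul_assoc, AddMonoidAlgebra.single_mul_single, h, mul_one, ← one_def, one_mul]

section Residues

variable {k : ℕ}

variable (k) in
def SupportedMod (R : Set (ZMod k)) (p : AddMonoidAlgebra ℝ ℤ) : Prop :=
  ∀ m, lcoeff p m ≠ 0 → (m : ZMod k) ∈ R

lemma supportedMod_zero_iff {p : AddMonoidAlgebra ℝ ℤ} :
    SupportedMod k {0} p ↔ ∀ m : ℤ, ¬ ((k : ℤ) ∣ m) → lcoeff p m = 0 := by
  simp only [SupportedMod, Set.mem_singleton_iff, ZMod.intCast_zmod_eq_zero_iff_dvd]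
  exact forall_congr' fun m => not_imp_comm

lemma SupportedMod.mono {R S : Set (ZMod k)} {p : AddMonoidAlgebra ℝ ℤ}
    (hp : SupportedMod k R p) (hRS : R ⊆ S) : SupportedMod k S p :=
  fun m hm => hRS (hp m hm)

lemma SupportedMod.mul {R S : Set (ZMod k)} {p q : AddMonoidAlgebra ℝ ℤ}
    (hp : SupportedMod k R p) (hq : SupportedMod k S q) : SupportedMod k (R + S) (p * q) := by
  intro m hm
  obtain ⟨m₁, m₂, h₁, h₂, rfl⟩ := exists_mem_support_of_lcoeff_mul_ne_zero hm
  rw [Int.cast_add]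
  exact Set.add_mem_add (hp m₁ h₁) (hq m₂ h₂)

lemma supportedMod_single (n : ℤ) (x : ℝ) :
    SupportedMod k {(n : ZMod k)} (AddMonoidAlgebra.single n x) := by
  intro m hm
  rw [lcoeff_single, Finsupp.single_apply] at hm
  rw [Set.mem_singleton_iff, (ite_ne_right_iff.1 hm).1]

variable (k) in
noncomputable def modPart (r : ZMod k) (p : AddMonoidAlgebra ℝ ℤ) : AddMonoidAlgebra ℝ ℤ :=
  ofCoeff ((lcoeff p).filter fun m : ℤ => (m : ZMod k) = r)

lemma lcoeff_modPart (r : ZMod k) (p : AddMonoidAlgebra ℝ ℤ) (m : ℤ) :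
    lcoeff (modPart k r p) m = if (m : ZMod k) = r then lcoeff p m else 0 :=
  Finsupp.filter_apply _ _ m

variable {p : AddMonoidAlgebra ℝ ℤ}

lemma modPart_nonneg (hp : ∀ m, 0 ≤ lcoeff p m) (r : ZMod k) (m : ℤ) :
    0 ≤ lcoeff (modPart k r p) m := by
  rw [lcoeff_modPart]; split_ifs
  exacts [hp m, le_rfl]

lemma modPart_le (hp : ∀ m, 0 ≤ lcoeff p m) (r : ZMod k) (m : ℤ) :
    lcoeff (modPart k r p) m ≤ lcoeff p m := by
  rw [lcoeff_modPart]; split_ifs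
  exacts [le_rfl, hp m]

lemma sub_modPart_nonneg (hp : ∀ m, 0 ≤ lcoeff p m) (r : ZMod k) (m : ℤ) :
    0 ≤ lcoeff (p - modPart k r p) m :=
  sub_nonneg.2 (modPart_le hp r m)

lemma sub_modPart_le (hp : ∀ m, 0 ≤ lcoeff p m) (r : ZMod k) (m : ℤ) :
    lcoeff (p - modPart k r p) m ≤ lcoeff p m :=
  sub_le_self _ (modPart_nonneg hp r m)

lemma supportedMod_modPart (r : ZMod k) (p : AddMonoidAlgebra ℝ ℤ) :
    SupportedMod k {r} (modPart k r p) := fun m hm => by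
  rw [lcoeff_modPart] at hm
  exact (ite_ne_right_iff.1 hm).1

lemma supportedMod_sub_modPart (r : ZMod k) (p : AddMonoidAlgebra ℝ ℤ) :
    SupportedMod k {r}ᶜ (p - modPart k r p) := fun m hm hmr => hm <| by
  rw [lcoeff_sub, Finsupp.sub_apply, lcoeff_modPart, if_pos (Set.mem_singleton_iff.1 hmr), sub_self]

lemma sum_modPart [NeZero k] (p : AddMonoidAlgebra ℝ ℤ) : ∑ r : ZMod k, modPart k r p = p := by
  ext m
  simp only [coeff_sum, Finsupp.finsetSum_apply]
  exact (Finset.sum_congr rfl fun r _ => lcoeff_modPart r p m).trans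
    (Finset.sum_ite_eq_of_mem _ _ _ (Finset.mem_univ _))

lemma exists_ev1_le_mul_ev1_modPart [NeZero k] (p : AddMonoidAlgebra ℝ ℤ) :
    ∃ r : ZMod k, ev1 p ≤ k * ev1 (modPart k r p) := by
  obtain ⟨r, -, hr⟩ := Finset.exists_le_of_sum_le (s := Finset.univ) Finset.univ_nonempty
    (f := fun _ => ev1 p) (g := fun r => k * ev1 (modPart k r p)) <| by
      rw [Finset.sum_const, Finset.card_univ, ZMod.card, nsmul_eq_mul, ← Finset.mul_sum,
        ← ev1_sum, sum_modPart]
  exact ⟨r, hr⟩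

lemma supportedMod_zero_single_mul_modPart {n : ℤ} {r : ZMod k} (h : (n : ZMod k) + r = 0)
    (p : AddMonoidAlgebra ℝ ℤ) :
    SupportedMod k {0} (AddMonoidAlgebra.single n (1 : ℝ) * modPart k r p) :=
  ((supportedMod_single n 1).mul (supportedMod_modPart r p)).mono <| by
    rw [Set.singleton_add_singleton, h]

end Residues

lemma ev1_mul_le_l1R_mul_sub {k : ℕ} {p₁ p q₁ q b : AddMonoidAlgebra ℝ ℤ}
    (hp₁ : ∀ m, 0 ≤ lcoeff p₁ m) (hp : ∀ m, lcoeff p₁ m ≤ lcoeff p m)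
    (hq₁ : ∀ m, 0 ≤ lcoeff q₁ m) (hq : ∀ m, lcoeff q₁ m ≤ lcoeff q m)
    (hb : SupportedMod k {0} b) (hpq : SupportedMod k {0}ᶜ (p₁ * q₁)) :
    ev1 p₁ * ev1 q₁ ≤ l1R (p * q - b) := by
  rw [← ev1_mul, ← l1R_eq_ev1 (lcoeff_mul_nonneg hp₁ hq₁)]
  refine l1R_le_of_abs_le fun m => ?_
  by_cases h : lcoeff (p₁ * q₁) m = 0
  · rw [h, abs_zero]
    exact abs_nonneg _
  have hbm : lcoeff b m = 0 := by_contra fun hbm => hpq m h (hb m hbm)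
  rw [lcoeff_sub, Finsupp.sub_apply, hbm, sub_zero, abs_of_nonneg (lcoeff_mul_nonneg hp₁ hq₁ m)]
  exact (lcoeff_mul_le_mul hp₁ hp hq₁ hq m).trans (le_abs_self _)

lemma sub_lt_of_cross_le {κ ε A A₁ C C₁ E : ℝ} (hκ : 2 ≤ κ) (hκε : (κ ^ 2 - κ) * ε < 1 / 2)
    (hA₁ : 0 ≤ A₁) (hA₁A : A₁ ≤ A) (hAκ : A ≤ κ * A₁) (hC₁ : 0 ≤ C₁) (hC₁C : C₁ ≤ C)
    (h₁ : A₁ * (C - C₁) ≤ E) (h₂ : (A - A₁) * C₁ ≤ E) (hE : 0 ≤ E) (hEε : E < ε * A * C) :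
    A - A₁ < (κ ^ 2 - κ) * ε * A ∧ C - C₁ < (κ ^ 2 - κ) * ε * C := by
  have hεAC : 0 < ε * A * C := hE.trans_lt hEε
  have hA : 0 < A := (hA₁.trans hA₁A).lt_of_ne (by rintro rfl; simp at hεAC)
  have hC : 0 < C := (hC₁.trans hC₁C).lt_of_ne (by rintro rfl; simp at hεAC)
  have hε : 0 < ε := by nlinarith [mul_pos hA hC]
  have hκ₁ : κ * ε ≤ (κ ^ 2 - κ) * ε := mul_le_mul_of_nonneg_right (by nlinarith) hε.le
  have hκ₂ : 2 * ε ≤ (κ ^ 2 - κ) * ε := mul_le_mul_of_nonneg_right (by nlinarith) hε.le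
  have hCC₁ : C - C₁ < κ * ε * C := by
    refine lt_of_mul_lt_mul_left ?_ hA.le
    calc A * (C - C₁) ≤ κ * (A₁ * (C - C₁)) := by nlinarith
      _ ≤ κ * E := by gcongr
      _ < A * (κ * ε * C) := by nlinarith
  have hC₁half : C ≤ 2 * C₁ := by nlinarith
  have hAA₁ : A - A₁ < 2 * ε * A := by
    refine lt_of_mul_lt_mul_right ?_ hC.le
    calc (A - A₁) * C ≤ 2 * ((A - A₁) * C₁) := by nlinarith
      _ ≤ 2 * E := by gcongr
      _ < 2 * ε * A * C := by linarith
  constructor <;> nlinarith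

theorem almost_factor_through_B_general (k : ℕ) (hk : 2 ≤ k)
    (a c b : AddMonoidAlgebra ℝ ℤ)
    (ha : ∀ m, 0 ≤ lcoeff a m) (hc : ∀ m, 0 ≤ lcoeff c m)
    (hb : ∀ m : ℤ, ¬ ((k : ℤ) ∣ m) → lcoeff b m = 0)
    (ε : ℝ) (hkε : ((k : ℝ) ^ 2 - k) * ε < 1 / 2)
    (hac : l1R (a * c - b) < ε * ev1 a * ev1 c) :
    ∃ j : ℕ, j < k ∧ ∃ a' c' : AddMonoidAlgebra ℝ ℤ,
      (∀ m, 0 ≤ lcoeff a' m) ∧ (∀ m : ℤ, ¬ ((k : ℤ) ∣ m) → lcoeff a' m = 0) ∧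
      (∀ m, 0 ≤ lcoeff c' m) ∧ (∀ m : ℤ, ¬ ((k : ℤ) ∣ m) → lcoeff c' m = 0) ∧
      l1R (AddMonoidAlgebra.single (j : ℤ) 1 * a' - a) < ((k : ℝ) ^ 2 - k) * ε * ev1 a ∧
      l1R (AddMonoidAlgebra.single (-(j : ℤ)) 1 * c' - c) < ((k : ℝ) ^ 2 - k) * ε * ev1 c := by
  have : NeZero k := ⟨by omega⟩
  obtain ⟨r, hr⟩ := exists_ev1_le_mul_ev1_modPart (k := k) a
  have hb₀ : SupportedMod k {0} b := supportedMod_zero_iff.2 hb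
  have h₁ : ev1 (modPart k r a) * ev1 (c - modPart k (-r) c) ≤ l1R (a * c - b) :=
    ev1_mul_le_l1R_mul_sub (modPart_nonneg ha r) (modPart_le ha r) (sub_modPart_nonneg hc (-r))
      (sub_modPart_le hc (-r)) hb₀ <|
      ((supportedMod_modPart r a).mul (supportedMod_sub_modPart (-r) c)).mono
        (by simp [Set.singleton_add])
  have h₂ : ev1 (a - modPart k r a) * ev1 (modPart k (-r) c) ≤ l1R (a * c - b) :=
    ev1_mul_le_l1R_mul_sub (sub_modPart_nonneg ha r) (sub_modPart_le ha r)
      (modPart_nonneg hc (-r)) (modPart_le hc (-r)) hb₀ <|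
      ((supportedMod_sub_modPart r a).mul (supportedMod_modPart (-r) c)).mono
        (by simp [Set.add_singleton])
  rw [ev1_sub] at h₁ h₂
  obtain ⟨hA, hC⟩ := sub_lt_of_cross_le (by exact_mod_cast hk) hkε
    (ev1_nonneg (modPart_nonneg ha r)) (ev1_mono (modPart_le ha r)) hr
    (ev1_nonneg (modPart_nonneg hc (-r))) (ev1_mono (modPart_le hc (-r))) h₁ h₂ (l1R_nonneg _) hac
  have hsingle (n : ℤ) : ∀ m, 0 ≤ lcoeff (AddMonoidAlgebra.single n (1 : ℝ)) m :=
    Finsupp.single_nonneg.2 zero_le_one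
  refine ⟨r.val, r.val_lt, AddMonoidAlgebra.single (-(r.val : ℤ)) 1 * modPart k r a,
    AddMonoidAlgebra.single (r.val : ℤ) 1 * modPart k (-r) c,
    lcoeff_mul_nonneg (hsingle _) (modPart_nonneg ha r),
    supportedMod_zero_iff.1 <| supportedMod_zero_single_mul_modPart (by simp) a,
    lcoeff_mul_nonneg (hsingle _) (modPart_nonneg hc (-r)),
    supportedMod_zero_iff.1 <| supportedMod_zero_single_mul_modPart (by simp) c, ?_, ?_⟩
  · rwa [single_mul_single_mul_cancel (add_neg_cancel _), l1R_sub_eq_of_le (modPart_le ha r)]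
  · rwa [single_mul_single_mul_cancel (neg_add_cancel _), l1R_sub_eq_of_le (modPart_le hc (-r))]

/-- Lemma 7.2: if `a` and `c` have nonnegative coefficients and `a·c` is within
`ε·a(1)·c(1)` of an element `b` of `B = ℝ[x^{±k}]` (with `(k²−k)ε < 1/2`), then, up to a
shift by some `x^j` with `0 ≤ j < k`, both `a` and `c` are close to elements of `B⁺`. -/
theorem almost_factor_through_B (k : ℕ) (hk : 2 ≤ k)
    (a c b : AddMonoidAlgebra ℝ ℤ)
    (ha : ∀ m, 0 ≤ lcoeff a m) (hc : ∀ m, 0 ≤ lcoeff c m)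
    (hb : ∀ m : ℤ, ¬ ((k : ℤ) ∣ m) → lcoeff b m = 0)
    (ε : ℝ) (hε : 0 < ε) (hkε : ((k : ℝ) ^ 2 - k) * ε < 1 / 2)
    (hac : l1R (a * c - b) < ε * ev1 a * ev1 c) :
    ∃ j : ℕ, j < k ∧ ∃ a' c' : AddMonoidAlgebra ℝ ℤ,
      (∀ m, 0 ≤ lcoeff a' m) ∧ (∀ m : ℤ, ¬ ((k : ℤ) ∣ m) → lcoeff a' m = 0) ∧
      (∀ m, 0 ≤ lcoeff c' m) ∧ (∀ m : ℤ, ¬ ((k : ℤ) ∣ m) → lcoeff c' m = 0) ∧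
      l1R (AddMonoidAlgebra.single (j : ℤ) 1 * a' - a) < ((k : ℝ) ^ 2 - k) * ε * ev1 a ∧
      l1R (AddMonoidAlgebra.single (-(j : ℤ)) 1 * c' - c) < ((k : ℝ) ^ 2 - k) * ε * ev1 c :=
  almost_factor_through_B_general k hk a c b ha hc hb ε hkε hac
end
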